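/- Let Γ act transitively on the vertices of a graph G by automorphisms, let Λ be a normal subgroup of Γ acting semiregularly on V(G), and suppose some Λ-orbit on V(G) is an independent set of G. Then Λ acts semiregularly on E(G), i.e., no nonidentity element of Λ fixes an edge of G. -/

import Mathlib

/-- A multigraph: an abstract edge set `E` together with an assignment of an unordered
pair of end-vertices to each edge. Loops and parallel edges are allowed. -/
structure Multigraph (V E : Type*) where
  ends : E → Sym2 V

namespace Multigraph

variable {V E : Type*}

/-- A multigraph is loopless if no edge is a loop. -/
def Loopless (G : Multigraph V E) : Prop := ∀ e, ¬ (G.ends e).IsDiag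

/-- Two vertices are adjacent if some edge joins them. -/
def Adj (G : Multigraph V E) (v w : V) : Prop := ∃ e, G.ends e = s(v, w)

/-- A multigraph is connected if any two vertices are joined by a walk. -/
def Connected (G : Multigraph V E) : Prop := ∀ v w : V, Relation.ReflTransGen G.Adj v w

open Classical in
/-- The number of times edge `e` is incident with vertex `v` (a loop counts twice). -/
noncomputable def incCount (G : Multigraph V E) (v : V) (e : E) : ℕ :=
  if G.ends e = Sym2.diag v then 2 else if v ∈ G.ends e then 1 else 0

/-- The degree of a vertex. -/
noncomputable def degree (G : Multigraph V E) [Fintype E] (v : V) : ℕ :=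
  ∑ e, G.incCount v e

open Classical in
/-- The degree of a vertex in the spanning subgraph with edge set `S`. -/
noncomputable def degreeIn (G : Multigraph V E) [Fintype E] (S : Set E) (v : V) : ℕ :=
  ∑ e, if e ∈ S then G.incCount v e else 0

/-- An orientation of a multigraph: each edge gets a tail and a head realizing its ends. -/
structure Orientation (G : Multigraph V E) where
  tail : E → V
  head : E → V
  consistent : ∀ e, G.ends e = s(tail e, head e)

open Classical in
/-- Sum of `φ` over the edges with tail `v`. -/
noncomputable def outflow [Fintype E] {G : Multigraph V E} (D : G.Orientation)
    (φ : E → ℤ) (v : V) : ℤ :=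
  ∑ e, if D.tail e = v then φ e else 0

open Classical in
/-- Sum of `φ` over the edges with head `v`. -/
noncomputable def inflow [Fintype E] {G : Multigraph V E} (D : G.Orientation)
    (φ : E → ℤ) (v : V) : ℤ :=
  ∑ e, if D.head e = v then φ e else 0

/-- `(D, φ)` is a `k`-flow: all values have absolute value `< k` and flow is conserved. -/
def IsFlow [Fintype E] {G : Multigraph V E} (D : G.Orientation) (φ : E → ℤ) (k : ℕ) : Prop :=
  (∀ e, |φ e| < (k : ℤ)) ∧ ∀ v : V, outflow D φ v = inflow D φ v

/-- `G` admits a nowhere-zero `k`-flow. -/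
def HasNowhereZeroFlow (G : Multigraph V E) [Fintype E] (k : ℕ) : Prop :=
  ∃ (D : G.Orientation) (φ : E → ℤ), IsFlow D φ k ∧ ∀ e, φ e ≠ 0

/-- The automorphism group of a multigraph, as a subgroup of `Perm V × Perm E`:
pairs of permutations compatible with the incidence structure. -/
def aut (G : Multigraph V E) : Subgroup (Equiv.Perm V × Equiv.Perm E) where
  carrier := {p | ∀ e, G.ends (p.2 e) = (G.ends e).map p.1}
  one_mem' := by
    intro e
    simp
  mul_mem' := by
    intro p q hp hq e
    have h1 := hp (q.2 e)
    have h2 := hq e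
    simp only [Prod.snd_mul, Prod.fst_mul, Equiv.Perm.mul_apply, Equiv.Perm.coe_mul]
    rw [h1, h2, Sym2.map_map]
  inv_mem' := by
    intro p hp e
    have h := hp ((p.2)⁻¹ e)
    rw [show p.2 ((p.2)⁻¹ e) = e from (Equiv.eq_symm_apply _).mp rfl] at h
    rw [Prod.snd_inv, Prod.fst_inv, h, Sym2.map_map]
    have : (⇑(p.1)⁻¹ ∘ ⇑p.1) = id := by
      ext x; simp
    rw [this, Sym2.map_id, id_eq]

end Multigraph


/-!
If `l ∈ Λ` fixes an edge `e = {v, w}`, then either `l` fixes `v`, impossible by semiregularity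
for `l ≠ 1`, or `l` swaps the ends, so that `v` is adjacent to `l • v`. The latter is excluded
because, by normality of `Λ` and transitivity of `Γ`, every `Λ`-orbit is the image under some
`γ ∈ Γ` of the independent orbit `Λ(u)`, hence is itself independent.
-/

namespace Multigraph

variable {Γ V E : Type*} (G : Multigraph V E)

theorem exists_smul_eq_self_or_ends_eq_of_smul_eq [SMul Γ V] [SMul Γ E] {g : Γ} {e : E}
    (hg : G.ends (g • e) = (G.ends e).map (g • ·)) (he : g • e = e) :
    ∃ v : V, g • v = v ∨ G.ends e = s(v, g • v) := by
  induction hvw : G.ends e using Sym2.ind with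
  | h v w =>
    rw [he, hvw, Sym2.map_mk, eq_comm, Sym2.eq_iff] at hg
    rcases hg with ⟨hv, _⟩ | ⟨hv, _⟩
    · exact ⟨v, Or.inl hv⟩
    · exact ⟨v, Or.inr (by rw [hv])⟩

section Action

variable [Group Γ] [MulAction Γ V] [MulAction Γ E]
  (hcompat : ∀ (γ : Γ) (e : E), G.ends (γ • e) = (G.ends e).map (γ • ·))
include hcompat

theorem Adj.smul {v w : V} (h : G.Adj v w) (γ : Γ) : G.Adj (γ • v) (γ • w) := by
  obtain ⟨e, he⟩ := h
  exact ⟨γ • e, by rw [hcompat, he, Sym2.map_mk]⟩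

theorem not_adj_smul_self_of_normal (htrans : ∀ v w : V, ∃ γ : Γ, γ • v = w)
    {Λ : Subgroup Γ} (hΛ : Λ.Normal) {u : V} (hu : ∀ l ∈ Λ, ¬ G.Adj u (l • u))
    (v : V) {l : Γ} (hl : l ∈ Λ) : ¬ G.Adj v (l • v) := by
  obtain ⟨γ, rfl⟩ := htrans u v
  intro hadj
  refine hu (γ⁻¹ * l * γ) (by simpa using hΛ.conj_mem l hl γ⁻¹) ?_
  simpa [mul_smul] using hadj.smul G hcompat γ⁻¹

end Action

end Multigraph

open Multigraph in
theorem stmt9_general {Γ V E : Type*} [Group Γ] [MulAction Γ V] [MulAction Γ E]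
    (G : Multigraph V E)
    (hcompat : ∀ (γ : Γ) (e : E), G.ends (γ • e) = (G.ends e).map (γ • ·))
    (htrans : ∀ v w : V, ∃ γ : Γ, γ • v = w)
    (Λ : Subgroup Γ) (hnormal : Λ.Normal)
    (hsemireg : ∀ l ∈ Λ, ∀ v : V, l • v = v → l = 1)
    (u : V)
    (hindep : ∀ e : E, ∀ l₁ ∈ Λ, ∀ l₂ ∈ Λ, G.ends e ≠ s(l₁ • u, l₂ • u)) :
    ∀ l ∈ Λ, l ≠ 1 → ∀ e : E, l • e ≠ e := by
  intro l hl hl1 e he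
  have hu : ∀ m ∈ Λ, ¬ G.Adj u (m • u) := fun m hm ⟨f, hf⟩ =>
    hindep f 1 Λ.one_mem m hm (by rwa [one_smul])
  obtain ⟨v, hfix | hswap⟩ := G.exists_smul_eq_self_or_ends_eq_of_smul_eq (hcompat l e) he
  · exact hl1 (hsemireg l hl v hfix)
  · exact G.not_adj_smul_self_of_normal hcompat htrans hnormal hu v hl ⟨e, hswap⟩

open Multigraph in
/-- Let Γ act on a loopless multigraph G by automorphisms, transitively on vertices, let
Λ ⊴ Γ act semiregularly on vertices, and suppose some Λ-orbit on the vertices is an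
independent set. Then no nonidentity element of Λ fixes an edge of G. -/
theorem stmt9 {Γ V E : Type*} [Group Γ] [MulAction Γ V] [MulAction Γ E]
    (G : Multigraph V E) (hloopless : G.Loopless)
    (hcompat : ∀ (γ : Γ) (e : E), G.ends (γ • e) = (G.ends e).map (γ • ·))
    (htrans : ∀ v w : V, ∃ γ : Γ, γ • v = w)
    (Λ : Subgroup Γ) (hnormal : Λ.Normal)
    (hsemireg : ∀ l ∈ Λ, ∀ v : V, l • v = v → l = 1)
    (u : V)
    (hindep : ∀ e : E, ∀ l₁ ∈ Λ, ∀ l₂ ∈ Λ, G.ends e ≠ s(l₁ • u, l₂ • u)) :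
    ∀ l ∈ Λ, l ≠ 1 → ∀ e : E, l • e ≠ e :=
  stmt9_general G hcompat htrans Λ hnormal hsemireg u hindep
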